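/- Let G be a trimmed leveled normalized mapping DAG, write JL(v) := JL({v}) for each vertex v, and for each level i define Rlevel(i) := {JL(v) : v a vertex of G with level(v) = i}. Then for all levels i and j, if j ∈ Rlevel(i) and j > i, then j ∈ Rlevel(i+1). -/
import Mathlib


namespace Spanners

/-- Variable markers: an open marker `⊢x` or a close marker `x⊣` for a variable `x`. -/
inductive Marker (V : Type) : Type where
  | openM : V → Marker V
  | closeM : V → Marker V
deriving DecidableEq

/-- A variable-set automaton (VA) over alphabet `Sig`, variables `V`, states `Q`. -/
structure VA (Sig V Q : Type) : Type where
  init : Q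
  final : Set Q
  letterTr : Q → Sig → Q → Prop
  varTr : Q → Marker V → Q → Prop

namespace VA

variable {Sig V Q : Type}

/-- `Run A d (q, i) L (q', i')` holds when there is a run of `A` on `d` from configuration
`(q, i)` to configuration `(q', i')` reading the list `L` of (marker, position) pairs,
in order. Letter transitions advance the position and must match the document letter;
variable transitions keep the position and read their marker at that position. -/
inductive Run (A : VA Sig V Q) (d : List Sig) :
    Q × ℕ → List (Marker V × ℕ) → Q × ℕ → Prop where
  | refl (c : Q × ℕ) : Run A d c [] c
  | stepLetter {q : Q} {i : ℕ} {a : Sig} {q' : Q} {L : List (Marker V × ℕ)} {c : Q × ℕ} :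
      A.letterTr q a q' → d[i]? = some a →
      Run A d (q', i + 1) L c → Run A d (q, i) L c
  | stepVar {q : Q} {i : ℕ} {m : Marker V} {q' : Q} {L : List (Marker V × ℕ)} {c : Q × ℕ} :
      A.varTr q m q' →
      Run A d (q', i) L c → Run A d (q, i) ((m, i) :: L) c

/-- An accepting run of `A` on `d`, reading the trace `L`: it goes from the initial
configuration `(q₀, 0)` to a configuration `(q_f, |d|)` with `q_f` final. -/
def Accepting (A : VA Sig V Q) (d : List Sig) (L : List (Marker V × ℕ)) : Prop :=
  ∃ qf, qf ∈ A.final ∧ A.Run d (A.init, 0) L (qf, d.length)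

/-- Validity of a trace: every variable marker is read at most once, and whenever
`⊢x` is read at position `i` then `x⊣` is read at some position `i' ≥ i`. -/
def ValidTrace (L : List (Marker V × ℕ)) : Prop :=
  (∀ (m : Marker V) (k k' : ℕ) (hk : k < L.length) (hk' : k' < L.length),
      (L.get ⟨k, hk⟩).1 = m → (L.get ⟨k', hk'⟩).1 = m → k = k') ∧
  (∀ (x : V) (i : ℕ), (Marker.openM x, i) ∈ L →
      ∃ i', i ≤ i' ∧ (Marker.closeM x, i') ∈ L)

/-- A valid run: an accepting run whose trace is valid. -/
def Valid (A : VA Sig V Q) (d : List Sig) (L : List (Marker V × ℕ)) : Prop :=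
  A.Accepting d L ∧ ValidTrace L

/-- The mapping defined by (the trace of) a valid run: the graph of the partial function
sending each variable `x` to the span `[i, i'⟩` such that `⊢x` is read at `i` and
`x⊣` is read at `i'`. -/
def traceMapping (L : List (Marker V × ℕ)) : Set (V × ℕ × ℕ) :=
  {p | (Marker.openM p.1, p.2.1) ∈ L ∧ (Marker.closeM p.1, p.2.2) ∈ L}

/-- The document spanner of a VA: to each document it assigns the set of mappings
of its valid runs. -/
def spanner (A : VA Sig V Q) (d : List Sig) : Set (Set (V × ℕ × ℕ)) :=
  {m | ∃ L, A.Valid d L ∧ m = traceMapping L}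

/-- A VA is sequential when, on every document, every accepting run is valid. -/
def Sequential (A : VA Sig V Q) : Prop :=
  ∀ (d : List Sig) (L : List (Marker V × ℕ)), A.Accepting d L → ValidTrace L

/-- Two VAs are equivalent when their document spanners agree on every document. -/
def Equivalent {Q' : Type} (A : VA Sig V Q) (B : VA Sig V Q') : Prop :=
  ∀ d : List Sig, A.spanner d = B.spanner d

/-- A VA is trimmed when every state appears in some accepting run on some document. -/
def Trimmed (A : VA Sig V Q) : Prop :=
  ∀ q : Q, ∃ (d : List Sig) (i : ℕ) (L₁ L₂ : List (Marker V × ℕ)) (qf : Q),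
    qf ∈ A.final ∧ A.Run d (A.init, 0) L₁ (q, i) ∧ A.Run d (q, i) L₂ (qf, d.length)

/-- The mappings of a VA on a document, each written as the set of pairs `(m, i)` of a
marker `m` read at position `i` in a valid run. -/
def mappings (A : VA Sig V Q) (d : List Sig) : Set (Set (Marker V × ℕ)) :=
  {T | ∃ L, A.Valid d L ∧ T = {p | p ∈ L}}

end VA

/-- A labeled leveled-style DAG structure used for mapping DAGs: vertices are pairs whose
second component is a nonnegative integer (the level); each edge label is either `none`
(an ε-edge) or `some S` for a finite set `S` of (marker, position) pairs (a marker edge). -/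
structure LMDAG (β M : Type) : Type where
  verts : Set (β × ℕ)
  init : β × ℕ
  final : β × ℕ
  edge : β × ℕ → Option (Finset (M × ℕ)) → β × ℕ → Prop

namespace LMDAG

variable {β M : Type}

/-- Paths in the DAG, recording the list of edge labels traversed. -/
inductive Path (G : LMDAG β M) : β × ℕ → List (Option (Finset (M × ℕ))) → β × ℕ → Prop where
  | refl (v : β × ℕ) : Path G v [] v
  | step {u : β × ℕ} {l : Option (Finset (M × ℕ))} {v : β × ℕ}
      {L : List (Option (Finset (M × ℕ)))} {w : β × ℕ} :
      G.edge u l v → Path G v L w → Path G u (l :: L) w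

/-- The mapping `μ(π)` of a path, given by its list of labels: the union of the labels
of its marker edges. -/
def mu (L : List (Option (Finset (M × ℕ)))) : Set (M × ℕ) :=
  {p | ∃ S : Finset (M × ℕ), some S ∈ L ∧ p ∈ S}

/-- Requirements of a mapping DAG: initial and final vertices and edge endpoints are
vertices, the graph is acyclic, and on every path the labels of the marker edges are
pairwise disjoint. -/
def IsMappingDAG (G : LMDAG β M) : Prop :=
  G.init ∈ G.verts ∧ G.final ∈ G.verts ∧
  (∀ u l v, G.edge u l v → u ∈ G.verts ∧ v ∈ G.verts) ∧
  (∀ v L, G.Path v L v → L = []) ∧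
  (∀ u L w, G.Path u L w →
    L.Pairwise fun l₁ l₂ => ∀ S₁ S₂ : Finset (M × ℕ),
      l₁ = some S₁ → l₂ = some S₂ → Disjoint S₁ S₂)

/-- Label lists that start with a marker edge, end with an ε-edge, and alternate
between marker edges and ε-edges. -/
inductive Alt : List (Option (Finset (M × ℕ))) → Prop where
  | base (S : Finset (M × ℕ)) : Alt [some S, none]
  | cons (S : Finset (M × ℕ)) {L : List (Option (Finset (M × ℕ)))} :
      Alt L → Alt (some S :: none :: L)

/-- A mapping DAG is normalized if every path from the initial vertex to the final vertex
starts with a marker edge, ends with an ε-edge, and alternates between marker edges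
and ε-edges. -/
def Normalized (G : LMDAG β M) : Prop :=
  ∀ L, G.Path G.init L G.final → Alt L

/-- A mapping DAG is leveled if the initial vertex has level 0, every ε-edge increases
the level by exactly one, every marker edge preserves the level, and every pair `(m, i)`
in the label of a marker edge has `i` equal to the level of its endpoints. -/
def Leveled (G : LMDAG β M) : Prop :=
  G.init.2 = 0 ∧
  (∀ u v, G.edge u none v → v.2 = u.2 + 1) ∧
  (∀ u S v, G.edge u (some S) v → v.2 = u.2 ∧ ∀ p ∈ S, p.2 = u.2)

/-- A mapping DAG is trimmed if every vertex is accessible from the initial vertex and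
co-accessible to the final vertex. -/
def Trimmed (G : LMDAG β M) : Prop :=
  ∀ v ∈ G.verts, (∃ L, G.Path G.init L v) ∧ (∃ L, G.Path v L G.final)

/-- `M(U)`: the set of mappings of paths from a vertex of `U` to the final vertex. -/
def MapSet (G : LMDAG β M) (U : Set (β × ℕ)) : Set (Set (M × ℕ)) :=
  {T | ∃ v ∈ U, ∃ L, G.Path v L G.final ∧ T = mu L}

/-- A level set: either the singleton of the final vertex, or a non-empty set of vertices
which all have the same level and are each the source of some marker edge. -/
def IsLevelSet (G : LMDAG β M) (Λ : Set (β × ℕ)) : Prop :=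
  Λ = {G.final} ∨
  (Λ.Nonempty ∧ (∃ i, ∀ v ∈ Λ, v.2 = i) ∧
    ∀ v ∈ Λ, v ∈ G.verts ∧ ∃ S w, G.edge v (some S) w)

/-- The level of a level set (the common level of its vertices). -/
noncomputable def levelOf (Λ : Set (β × ℕ)) : ℕ := sInf {i | ∃ v ∈ Λ, v.2 = i}

/-- `NextLevel(Λ)`: the pairs `(S, Λ'')` where `S` labels some marker edge starting in `Λ`,
and `Λ''` is the set of vertices reached from a vertex of `Λ` by a marker edge labeled `S`
followed by an ε-edge. -/
def NextLevel (G : LMDAG β M) (Λ : Set (β × ℕ)) :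
    Set (Finset (M × ℕ) × Set (β × ℕ)) :=
  {p | (∃ v ∈ Λ, ∃ v', G.edge v (some p.1) v') ∧
       p.2 = {w | ∃ v ∈ Λ, ∃ v', G.edge v (some p.1) v' ∧ G.edge v' none w}}

/-- A vertex which is the final vertex or has an outgoing edge whose label is neither
ε nor ∅. -/
def GoodVert (G : LMDAG β M) (v : β × ℕ) : Prop :=
  v = G.final ∨ ∃ (S : Finset (M × ℕ)) (w : β × ℕ), G.edge v (some S) w ∧ S ≠ ∅

/-- Reachability by a directed path. -/
def Reachable (G : LMDAG β M) (u v : β × ℕ) : Prop := ∃ L, G.Path u L v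

/-- The jump level `JL(Λ)`: the first level `j ≥ level(Λ)` containing a vertex `v'`
reachable from some vertex of `Λ` such that `v'` is the final vertex or has an outgoing
edge whose label is neither ε nor ∅. -/
noncomputable def JL (G : LMDAG β M) (Λ : Set (β × ℕ)) : ℕ :=
  sInf {j | levelOf Λ ≤ j ∧
    ∃ v', v'.2 = j ∧ G.GoodVert v' ∧ ∃ v ∈ Λ, G.Reachable v v'}

/-- The jump set `Jump(Λ)`: `Λ` itself if `JL(Λ) = level(Λ)`, and otherwise the set of
vertices at level `JL(Λ)` reachable from some vertex of `Λ` by a directed path whose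
last edge is an ε-edge. -/
def JumpSet (G : LMDAG β M) (Λ : Set (β × ℕ)) : Set (β × ℕ) :=
  {w | (G.JL Λ = levelOf Λ ∧ w ∈ Λ) ∨
       (G.JL Λ ≠ levelOf Λ ∧ w.2 = G.JL Λ ∧
         ∃ v ∈ Λ, ∃ L v', G.Path v L v' ∧ G.edge v' none w)}

/-- `Reach(i, j)` relates a vertex `u` of level `i` to a vertex `v` of level `j` when
there is a path from `u` to `v` traversing only ε-edges and marker edges labeled ∅,
whose last edge is an ε-edge. -/
def ReachRel (G : LMDAG β M) (i j : ℕ) (u v : β × ℕ) : Prop :=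
  u ∈ G.verts ∧ v ∈ G.verts ∧ u.2 = i ∧ v.2 = j ∧
  ∃ L, G.Path u L v ∧ (∀ l ∈ L, l = none ∨ l = some (∅ : Finset (M × ℕ))) ∧
    L.getLast? = some none

/-- Paths as data: `IsPathL G u steps w` holds when `steps` is the list of
(label, target vertex) pairs of the successive edges of a path from `u` to `w`. -/
def IsPathL (G : LMDAG β M) : β × ℕ → List (Option (Finset (M × ℕ)) × (β × ℕ)) → β × ℕ → Prop
  | u, [], w => u = w
  | u, e :: rest, w => G.edge u e.1 e.2 ∧ G.IsPathL e.2 rest w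

/-- An `S`-path: a path with no ε-edge whose labels are exactly the elements of `S`,
each occurring exactly once. -/
def ExactPath [DecidableEq M] (G : LMDAG β M) (S : Set (Finset (M × ℕ)))
    (u v : β × ℕ) : Prop :=
  ∃ L, G.Path u L v ∧ (∀ l ∈ L, ∃ s ∈ S, l = some s) ∧
    ∀ s ∈ S, List.count (some s) L = 1

/-- An `S⁺/S⁻`-path: a path with no ε-edge and no edge labeled by an element of `S⁻`,
on which every label of `S⁺` occurs exactly once. -/
def PMPath [DecidableEq M] (G : LMDAG β M) (Sp Sm : Set (Finset (M × ℕ)))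
    (u v : β × ℕ) : Prop :=
  ∃ L, G.Path u L v ∧ (∀ l ∈ L, l ≠ none ∧ ∀ s ∈ Sm, l ≠ some s) ∧
    ∀ s ∈ Sp, List.count (some s) L = 1

end LMDAG

/-- An extended VA: letter transitions and ev-transitions reading a (possibly empty)
finite set of variable markers; states are partitioned via `evState` into ev-states
and letter-states. -/
structure EVA (Sig V Q : Type) : Type where
  init : Q
  final : Set Q
  evState : Q → Prop
  letterTr : Q → Sig → Q → Prop
  evTr : Q → Finset (Marker V) → Q → Prop

namespace EVA

/-- The data of a run of an extended VA on a document of length `n`: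
states `qs i`, `qs' i` and marker sets `Ms i` for `0 ≤ i ≤ n`. -/
structure RunData (Q V : Type) (n : ℕ) : Type where
  qs : Fin (n + 1) → Q
  qs' : Fin (n + 1) → Q
  Ms : Fin (n + 1) → Finset (Marker V)

variable {Sig V Q : Type}

/-- Wellformedness of the partition into ev-states and letter-states: ev-transitions go
from ev-states to letter-states, letter transitions from letter-states to ev-states,
the initial state is an ev-state, and all final states are letter-states. -/
def WF (A : EVA Sig V Q) : Prop :=
  (∀ q M q', A.evTr q M q' → A.evState q ∧ ¬ A.evState q') ∧
  (∀ q a q', A.letterTr q a q' → ¬ A.evState q ∧ A.evState q') ∧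
  A.evState A.init ∧ ∀ q ∈ A.final, ¬ A.evState q

/-- `r` is an accepting run of `A` on `d`:
`(q₀,0) →^{M₀} (q₀',0) →^{d₀} (q₁,1) →^{M₁} ⋯ →^{d_{n-1}} (q_n,n) →^{M_n} (q_n',n)`
with `q₀` the initial state and `q_n'` final. -/
def IsAccRun (A : EVA Sig V Q) (d : List Sig) (r : RunData Q V d.length) : Prop :=
  r.qs 0 = A.init ∧
  (∀ i, A.evTr (r.qs i) (r.Ms i) (r.qs' i)) ∧
  (∀ i : Fin d.length, A.letterTr (r.qs' i.castSucc) (d.get i) (r.qs i.succ)) ∧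
  r.qs' (Fin.last d.length) ∈ A.final

/-- The set of (marker, position) pairs read by a run. -/
def readSet {n : ℕ} (r : RunData Q V n) : Set (Marker V × ℕ) :=
  {p | ∃ i : Fin (n + 1), (i : ℕ) = p.2 ∧ p.1 ∈ r.Ms i}

/-- A valid run: an accepting run where every marker is read at most once and every open
marker read at position `i` is matched by the close marker read at some `i' ≥ i`. -/
def IsValidRun (A : EVA Sig V Q) (d : List Sig) (r : RunData Q V d.length) : Prop :=
  A.IsAccRun d r ∧
  (∀ (m : Marker V) (i j : Fin (d.length + 1)), m ∈ r.Ms i → m ∈ r.Ms j → i = j) ∧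
  (∀ (x : V) (i : Fin (d.length + 1)), Marker.openM x ∈ r.Ms i →
      ∃ j : Fin (d.length + 1), (i : ℕ) ≤ (j : ℕ) ∧ Marker.closeM x ∈ r.Ms j)

/-- An extended VA is sequential when every accepting run on every document is valid. -/
def Sequential (A : EVA Sig V Q) : Prop :=
  ∀ (d : List Sig) (r : RunData Q V d.length), A.IsAccRun d r → A.IsValidRun d r

/-- The mappings of an extended VA on a document, each written as the set of pairs
`(m, i)` of a marker `m` read at position `i` in a valid run. -/
def mappings (A : EVA Sig V Q) (d : List Sig) : Set (Set (Marker V × ℕ)) :=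
  {T | ∃ r : RunData Q V d.length, A.IsValidRun d r ∧ T = readSet r}

/-- The product DAG of an extended VA `A` and a document `d`: vertices
`Q × {0,…,n} ∪ {v_f}` (with `v_f = (none, n+1)` fresh), ε-edges for letter transitions
matching the document, marker edges labeled `{(m, i) | m ∈ M}` for ev-transitions at
each position `i`, and final ε-edges from `(q, n)`, `q` final, to `v_f`. -/
def productDAG [DecidableEq V] (A : EVA Sig V Q) (d : List Sig) :
    LMDAG (Option Q) (Marker V) where
  verts := {v | (∃ q : Q, v.1 = some q ∧ v.2 ≤ d.length) ∨ v = (none, d.length + 1)}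
  init := (some A.init, 0)
  final := (none, d.length + 1)
  edge := fun u l v =>
    (∃ (q : Q) (a : Sig) (q' : Q) (i : ℕ), A.letterTr q a q' ∧ d[i]? = some a ∧
        u = (some q, i) ∧ v = (some q', i + 1) ∧ l = none) ∨
    (∃ (q : Q) (Mset : Finset (Marker V)) (q' : Q) (i : ℕ),
        A.evTr q Mset q' ∧ i ≤ d.length ∧
        u = (some q, i) ∧ v = (some q', i) ∧ l = some (Mset.image fun m => (m, i))) ∨
    (∃ q : Q, q ∈ A.final ∧ u = (some q, d.length) ∧ v = (none, d.length + 1) ∧ l = none)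

end EVA

namespace VA

variable {Sig V Q : Type}

/-- The product DAG of a (non-extended) VA `A` and a document `d`: vertices
`Q × {0,…,n} ∪ {v_f}` (with `v_f = (none, n+1)` fresh), ε-edges for letter transitions
matching the document, marker edges labeled `{(m, i)}` for variable transitions at each
position `i`, and final ε-edges from `(q, n)`, `q` final, to `v_f`. -/
def productDAG (A : VA Sig V Q) (d : List Sig) : LMDAG (Option Q) (Marker V) where
  verts := {v | (∃ q : Q, v.1 = some q ∧ v.2 ≤ d.length) ∨ v = (none, d.length + 1)}
  init := (some A.init, 0)
  final := (none, d.length + 1)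
  edge := fun u l v =>
    (∃ (q : Q) (a : Sig) (q' : Q) (i : ℕ), A.letterTr q a q' ∧ d[i]? = some a ∧
        u = (some q, i) ∧ v = (some q', i + 1) ∧ l = none) ∨
    (∃ (q : Q) (m : Marker V) (q' : Q) (i : ℕ), A.varTr q m q' ∧ i ≤ d.length ∧
        u = (some q, i) ∧ v = (some q', i) ∧ l = some {(m, i)}) ∨
    (∃ q : Q, q ∈ A.final ∧ u = (some q, d.length) ∧ v = (none, d.length + 1) ∧ l = none)

end VA

open LMDAG in
private lemma aux_path_append {β M : Type} {G : LMDAG β M} :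
    ∀ {u : β × ℕ} {L : List (Option (Finset (M × ℕ)))} {v : β × ℕ}
      {L' : List (Option (Finset (M × ℕ)))} {w : β × ℕ},
      G.Path u L v → G.Path v L' w → G.Path u (L ++ L') w := by
  intro u L v L' w h1 h2
  induction h1 with
  | refl => simpa
  | step e _ ih => exact LMDAG.Path.step e (ih h2)

open LMDAG in
private lemma aux_levelOf_singleton {β : Type} (u : β × ℕ) :
    levelOf ({u} : Set (β × ℕ)) = u.2 := by
  unfold levelOf
  have h : {i | ∃ v ∈ ({u} : Set (β × ℕ)), v.2 = i} = {u.2} := by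
    ext k; simp [eq_comm]
  rw [h, csInf_singleton]

open LMDAG in
private lemma aux_exists_eps_target {β M : Type} (G : LMDAG β M) (hG : G.IsMappingDAG)
    (hlev : G.Leveled) :
    ∀ {v : β × ℕ} {L : List (Option (Finset (M × ℕ)))} {v' : β × ℕ},
      G.Path v L v' → v.2 < v'.2 →
      ∃ w, w ∈ G.verts ∧ w.2 = v.2 + 1 ∧ G.Reachable v w ∧ G.Reachable w v' := by
  intro v L v' hpath
  induction hpath with
  | refl v => intro h; omega
  | @step u l x L w e p ih =>
    intro hlt
    cases l with
    | none =>
      refine ⟨x, (hG.2.2.1 _ _ _ e).2, hlev.2.1 _ _ e, ⟨[none], ?_⟩, ⟨L, p⟩⟩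
      exact LMDAG.Path.step e (LMDAG.Path.refl x)
    | some S =>
      have hx : x.2 = u.2 := (hlev.2.2 _ _ _ e).1
      obtain ⟨y, hy1, hy2, ⟨L₀, hp₀⟩, hr2⟩ := ih (by omega)
      exact ⟨y, hy1, by omega, ⟨some S :: L₀, LMDAG.Path.step e hp₀⟩, hr2⟩

open LMDAG in
theorem stmt10 {β M : Type} (G : LMDAG β M) (hG : G.IsMappingDAG)
    (hnorm : G.Normalized) (hlev : G.Leveled) (htrim : G.Trimmed) (i j : ℕ)
    (hij : j ∈ {j' | ∃ v ∈ G.verts, v.2 = i ∧ G.JL {v} = j'}) (hgt : j > i) :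
    j ∈ {j' | ∃ v ∈ G.verts, v.2 = i + 1 ∧ G.JL {v} = j'} := by
  obtain ⟨v, hv, hvi, hJL⟩ := hij
  set Tv := {j' | levelOf ({v} : Set (β × ℕ)) ≤ j' ∧
    ∃ v', v'.2 = j' ∧ G.GoodVert v' ∧ ∃ x ∈ ({v} : Set (β × ℕ)), G.Reachable x v'} with hTv
  have hJLv : G.JL {v} = sInf Tv := rfl
  have hne : Tv.Nonempty := by
    by_contra h
    rw [Set.not_nonempty_iff_eq_empty] at h
    rw [hJLv, h, Nat.sInf_empty] at hJL
    omega
  have hmem : j ∈ Tv := by rw [← hJL, hJLv]; exact Nat.sInf_mem hne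
  obtain ⟨_, v', hv'j, hgood, x, hx, hreach⟩ := hmem
  rw [Set.mem_singleton_iff.mp hx] at hreach
  obtain ⟨L, hpath⟩ := hreach
  have hlt : v.2 < v'.2 := by rw [hvi, hv'j]; exact hgt
  obtain ⟨w, hwverts, hw2, ⟨L₁, hPvw⟩, hwreach⟩ := aux_exists_eps_target G hG hlev hpath hlt
  refine ⟨w, hwverts, by omega, ?_⟩
  set Tw := {j' | levelOf ({w} : Set (β × ℕ)) ≤ j' ∧
    ∃ v'', v''.2 = j' ∧ G.GoodVert v'' ∧ ∃ x ∈ ({w} : Set (β × ℕ)), G.Reachable x v''} with hTw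
  have hJLw : G.JL {w} = sInf Tw := rfl
  have hlw : levelOf ({w} : Set (β × ℕ)) = w.2 := aux_levelOf_singleton w
  have hlv : levelOf ({v} : Set (β × ℕ)) = v.2 := aux_levelOf_singleton v
  have hjTw : j ∈ Tw := by
    refine ⟨by omega, v', hv'j, hgood, w, rfl, hwreach⟩
  have hsub : Tw ⊆ Tv := by
    rintro k ⟨hk1, v'', hv''k, hg'', y, hy, ⟨L₂, hP₂⟩⟩
    rw [Set.mem_singleton_iff] at hy; subst hy
    exact ⟨by omega, v'', hv''k, hg'', v, rfl, ⟨L₁ ++ L₂, aux_path_append hPvw hP₂⟩⟩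
  have h1 : sInf Tw ≤ j := Nat.sInf_le hjTw
  have h2 : j ≤ sInf Tw := by
    rw [← hJL, hJLv]
    exact Nat.sInf_le (hsub (Nat.sInf_mem ⟨j, hjTw⟩))
  rw [hJLw]; omega

end Spanners
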